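/- For every real ν and every fixed x > 0, the Shu function has the leading-order behavior S_ν(x,t) ~ (1/2)·(x/2)^{ν-2} · t^{1-ν} · exp(-x²/(4t)) as t → 0⁺; that is, the ratio S_ν(x,t) / [ (1/2)·(x/2)^{ν-2} · t^{1-ν} · exp(-x²/(4t)) ] tends to 1 as t tends to 0 from the right. -/

import Mathlib

open Real MeasureTheory Filter

/-- The Shu function `S_ν(x,t) = (1/2)(x/2)^ν ∫_0^t τ^{-(ν+1)} e^{-τ - x²/(4τ)} dτ`. -/
noncomputable def shu (ν x t : ℝ) : ℝ :=
  (1/2) * (x/2) ^ ν * ∫ τ in (0:ℝ)..t, τ ^ (-(ν+1)) * Real.exp (-τ - x^2 / (4*τ))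

/-!
With `a = x²/4`, both `∫_0^t τ^{-(ν+1)} e^{-τ - a/τ} dτ` and `g(t) = t^{1-ν} e^{-a/t}` tend to `0`
as `t → 0⁺`, and `g'(t) = t^{-(ν+1)} ((1-ν)t + a) e^{-a/t}`. The ratio of the integrand to `g'` is
`e^{-t} / ((1-ν)t + a) → 1/a`, so by L'Hôpital's rule the integral is asymptotic to `g(t)/a`;
the constant `1/a` is exactly what turns `(x/2)^ν` into `(x/2)^{ν-2}`.
-/

open Set Topology

theorem integrableOn_Ioc_of_continuousOn_of_tendsto {E : Type*} [NormedAddCommGroup E]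
    {f : ℝ → E} {a b : ℝ} {c : E} (hf : ContinuousOn f (Ioc a b))
    (hlim : Tendsto f (𝓝[>] a) (𝓝 c)) : IntegrableOn f (Ioc a b) := by
  classical
  have hcont : ContinuousOn (Function.update f a c) (Icc a b) := by
    intro t ht
    rcases eq_or_lt_of_le ht.1 with rfl | hat
    · rw [continuousWithinAt_update_same]
      exact hlim.mono_left (nhdsWithin_mono _ fun s hs => hs.1.1.lt_of_ne' hs.2)
    · rw [continuousWithinAt_update_of_ne hat.ne']
      refine (hf t ⟨hat, ht.2⟩).mono_of_mem_nhdsWithin ?_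
      exact mem_nhdsWithin.2 ⟨Ioi a, isOpen_Ioi, hat, fun s hs => ⟨hs.1, hs.2.2⟩⟩
  exact (hcont.integrableOn_Icc.mono_set Ioc_subset_Icc_self).congr_fun
    (fun t ht => Function.update_of_ne ht.1.ne' _ _) measurableSet_Ioc

theorem lhopital_integral_zero_nhdsGT {f g g' : ℝ → ℝ} {a b : ℝ} {l : Filter ℝ}
    (hab : a < b) (hf : ContinuousOn f (Ioo a b)) (hint : IntegrableOn f (Ioc a b))
    (hgg' : ∀ᶠ t in 𝓝[>] a, HasDerivAt g (g' t) t) (hg' : ∀ᶠ t in 𝓝[>] a, g' t ≠ 0)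
    (hga : Tendsto g (𝓝[>] a) (𝓝 0)) (hdiv : Tendsto (fun t => f t / g' t) (𝓝[>] a) l) :
    Tendsto (fun t => (∫ τ in a..t, f τ) / g t) (𝓝[>] a) l := by
  have hint' : IntervalIntegrable f volume a b :=
    (intervalIntegrable_iff_integrableOn_Ioc_of_le hab.le).2 hint
  have hderiv : ∀ᶠ t in 𝓝[>] a, HasDerivAt (fun t => ∫ τ in a..t, f τ) (f t) t := by
    filter_upwards [Ioo_mem_nhdsGT hab] with t ht
    exact intervalIntegral.integral_hasDerivAt_right
      (hint'.mono_set (uIcc_subset_uIcc_left (Icc_subset_uIcc (Ioo_subset_Icc_self ht))))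
      (hf.stronglyMeasurableAtFilter isOpen_Ioo t ht) (hf.continuousAt (Ioo_mem_nhds ht.1 ht.2))
  have hlim : Tendsto (fun t => ∫ τ in a..t, f τ) (𝓝[>] a) (𝓝 0) := by
    have := intervalIntegral.continuousWithinAt_primitive (b₀ := a) (b₁ := a) (b₂ := b)
      (measure_singleton a) (by rwa [min_self, max_eq_right hab.le])
    rw [ContinuousWithinAt, intervalIntegral.integral_same] at this
    rw [← nhdsWithin_Ioo_eq_nhdsGT hab]
    exact this.mono_left (nhdsWithin_mono _ Ioo_subset_Icc_self)
  exact HasDerivAt.lhopital_zero_nhdsGT hderiv hgg' hg' hlim hga hdiv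

theorem tendsto_rpow_mul_exp_neg_div_nhdsGT_zero (s : ℝ) {a : ℝ} (ha : 0 < a) :
    Tendsto (fun t : ℝ => t ^ s * exp (-(a / t))) (𝓝[>] 0) (𝓝 0) := by
  refine ((tendsto_rpow_mul_exp_neg_mul_atTop_nhds_zero (-s) a ha).comp
    tendsto_inv_nhdsGT_zero).congr' ?_
  filter_upwards [self_mem_nhdsWithin] with t (ht : 0 < t)
  simp only [Function.comp, inv_rpow ht.le, rpow_neg ht.le, inv_inv, neg_mul, div_eq_mul_inv]

theorem hasDerivAt_rpow_mul_exp_neg_div (s a : ℝ) {t : ℝ} (ht : 0 < t) :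
    HasDerivAt (fun t : ℝ => t ^ s * exp (-(a / t)))
      (t ^ (s - 2) * (s * t + a) * exp (-(a / t))) t := by
  have hinv : HasDerivAt (fun t : ℝ => -(a / t)) (a / t ^ 2) t := by
    simpa [div_eq_mul_inv] using (hasDerivAt_inv ht.ne').const_mul (-a)
  refine ((hasDerivAt_rpow_const (p := s) (Or.inl ht.ne')).mul hinv.exp).congr_deriv ?_
  rw [show s - 1 = (s - 2) + 1 by ring, rpow_add ht, rpow_one,
    show s = (s - 2) + 2 by ring, rpow_add ht]
  norm_num
  field_simp

noncomputable def shuKernel (ν a τ : ℝ) : ℝ := τ ^ (-(ν + 1)) * exp (-τ - a / τ)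

theorem shu_eq_integral_shuKernel (ν x t : ℝ) :
    shu ν x t = 1 / 2 * (x / 2) ^ ν * ∫ τ in 0..t, shuKernel ν (x ^ 2 / 4) τ := by
  simp only [shu, shuKernel, div_mul_eq_div_div]

theorem shuKernel_eq_exp_neg_mul (ν a : ℝ) :
    shuKernel ν a = fun τ => exp (-τ) * (τ ^ (-(ν + 1)) * exp (-(a / τ))) := by
  funext τ
  rw [shuKernel, sub_eq_add_neg, exp_add]
  ring

theorem continuousOn_shuKernel (ν a : ℝ) : ContinuousOn (shuKernel ν a) (Ioi 0) := by
  intro t (ht : 0 < t)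
  apply ContinuousAt.continuousWithinAt
  unfold shuKernel
  fun_prop (disch := first | exact ht.ne' | exact Or.inl ht.ne')

theorem tendsto_shuKernel_nhdsGT_zero (ν : ℝ) {a : ℝ} (ha : 0 < a) :
    Tendsto (shuKernel ν a) (𝓝[>] 0) (𝓝 0) := by
  have hexp : Tendsto (fun τ : ℝ => exp (-τ)) (𝓝[>] 0) (𝓝 1) := by
    have : Continuous fun τ : ℝ => exp (-τ) := by fun_prop
    simpa using this.continuousWithinAt.tendsto (x := 0) (s := Ioi 0)
  rw [shuKernel_eq_exp_neg_mul]
  simpa using hexp.mul (tendsto_rpow_mul_exp_neg_div_nhdsGT_zero _ ha)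

theorem tendsto_shuKernel_div_deriv (ν : ℝ) {a : ℝ} (ha : 0 < a) :
    Tendsto (fun t => shuKernel ν a t / (t ^ ((1 - ν) - 2) * ((1 - ν) * t + a) * exp (-(a / t))))
      (𝓝[>] 0) (𝓝 a⁻¹) := by
  have hcont : ContinuousAt (fun t : ℝ => exp (-t) / ((1 - ν) * t + a)) 0 := by
    fun_prop (disch := simpa using ha.ne')
  have hlim := hcont.tendsto.mono_left (nhdsWithin_le_nhds (s := Ioi 0))
  simp only [neg_zero, exp_zero, mul_zero, zero_add, one_div] at hlim
  refine hlim.congr' ?_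
  filter_upwards [self_mem_nhdsWithin] with t (ht : 0 < t)
  rw [shuKernel_eq_exp_neg_mul, show 1 - ν - 2 = -(ν + 1) by ring]
  have hpow : t ^ (-(ν + 1)) ≠ 0 := (rpow_pos_of_pos ht _).ne'
  have hexp : exp (-(a / t)) ≠ 0 := (exp_pos _).ne'
  rw [mul_comm (t ^ _) _, mul_assoc, mul_div_mul_right _ _ (mul_ne_zero hpow hexp)]

theorem tendsto_integral_shuKernel_div (ν : ℝ) {a : ℝ} (ha : 0 < a) :
    Tendsto (fun t => (∫ τ in 0..t, shuKernel ν a τ) / (t ^ (1 - ν) * exp (-(a / t))))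
      (𝓝[>] 0) (𝓝 a⁻¹) := by
  have hcont := continuousOn_shuKernel ν a
  have hpos : ∀ᶠ t in 𝓝[>] (0 : ℝ), 0 < (1 - ν) * t + a := by
    have : Continuous fun t : ℝ => (1 - ν) * t + a := by fun_prop
    exact (this.continuousWithinAt (s := Ioi 0) (x := 0)).tendsto.eventually
      (lt_mem_nhds (by simpa using ha))
  refine lhopital_integral_zero_nhdsGT zero_lt_one (hcont.mono Ioo_subset_Ioi_self)
    (integrableOn_Ioc_of_continuousOn_of_tendsto (hcont.mono Ioc_subset_Ioi_self)
      (tendsto_shuKernel_nhdsGT_zero ν ha)) ?_ ?_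
    (tendsto_rpow_mul_exp_neg_div_nhdsGT_zero _ ha) (tendsto_shuKernel_div_deriv ν ha)
  · filter_upwards [self_mem_nhdsWithin] with t ht
    exact hasDerivAt_rpow_mul_exp_neg_div _ _ ht
  · filter_upwards [self_mem_nhdsWithin, hpos] with t (ht : 0 < t) hta
    have hpow := rpow_pos_of_pos ht (1 - ν - 2)
    positivity

theorem stmt_14 (ν x : ℝ) (hx : 0 < x) :
    Tendsto (fun t : ℝ =>
        shu ν x t / ((1/2) * (x/2) ^ (ν-2) * t ^ (1-ν) * Real.exp (-x^2 / (4*t))))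
      (nhdsWithin 0 (Set.Ioi 0)) (nhds 1) := by
  have ha : 0 < x ^ 2 / 4 := by positivity
  have hlim := (tendsto_integral_shuKernel_div ν ha).const_mul (x ^ 2 / 4)
  rw [mul_inv_cancel₀ ha.ne'] at hlim
  refine hlim.congr' (Eventually.of_forall fun t => ?_)
  dsimp only
  rw [shu_eq_integral_shuKernel, rpow_sub (show 0 < x / 2 by positivity) ν 2, rpow_two,
    show -x ^ 2 / (4 * t) = -(x ^ 2 / 4 / t) by ring]
  have hpow : 0 < (x / 2) ^ ν := by positivity
  field_simp
  ring
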